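/- Let q be an odd prime power and ψ a nontrivial additive character of F_q. Then K_{GL(2,q)}(ψ;1) = q·(K(ψ;1)² + q² − q), where K_{GL(2,q)}(ψ;a) = Σ_{w∈GL(2,q)} ψ(Tr w + a·Tr w⁻¹) and K(ψ;a) = Σ_{α∈F_q*} ψ(α + aα⁻¹). -/
import Mathlib

open Finset Matrix

/-- The Kloosterman sum `K(ψ;a) = ∑_{α ∈ F*} ψ(α + a α⁻¹)`. -/
noncomputable def Kl {F : Type} [Field F] [Fintype F] [DecidableEq F] (ψ : F → ℂ) (a : F) : ℂ :=
  ∑ α : Fˣ, ψ ((α : F) + a * (α : F)⁻¹)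

/-- The Kloosterman sum for `GL(t,q)`. -/
noncomputable def KlGL {F : Type} [Field F] [Fintype F] [DecidableEq F]
    (t : ℕ) (ψ : F → ℂ) (a : F) : ℂ :=
  ∑ w : GL (Fin t) F,
    ψ (Matrix.trace (w : Matrix (Fin t) (Fin t) F)
        + a * Matrix.trace ((w⁻¹ : GL (Fin t) F) : Matrix (Fin t) (Fin t) F))

variable {F : Type} [Field F] [Fintype F] [DecidableEq F]

/-- complete character sum -/
lemma aux_charSum (ψ : AddChar F ℂ) (hψ : ψ ≠ 1) (c : F) :
    ∑ x : F, ψ (x * c) = if c = 0 then (Fintype.card F : ℂ) else 0 := by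
  split_ifs with h
  · simp [h, Finset.card_univ]
  · have h1 : AddChar.mulShift ψ c ≠ 1 := (AddChar.IsPrimitive.of_ne_one hψ) h
    have h0 : (∑ x : F, (AddChar.mulShift ψ c) x) = 0 :=
      AddChar.sum_eq_zero_iff_ne_zero.2 (AddChar.ne_zero_iff.2 (AddChar.ne_one_iff.1 h1))
    calc ∑ x : F, ψ (x * c) = ∑ x : F, (AddChar.mulShift ψ c) x := by
          simp [AddChar.mulShift_apply, mul_comm]
      _ = 0 := h0

/-- equiv of F^4 with 2x2 matrices, in order (c, a, e, b) ↦ !![a,b;c,e] -/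
def aux_equiv : (F × F × F × F) ≃ Matrix (Fin 2) (Fin 2) F where
  toFun x := !![x.2.1, x.2.2.2; x.1, x.2.2.1]
  invFun M := (M 1 0, M 0 0, M 1 1, M 0 1)
  left_inv x := by simp
  right_inv M := by
    simp only []
    exact (Matrix.eta_fin_two M).symm

lemma aux_trace_form (w : GL (Fin 2) F) :
    Matrix.trace (w : Matrix (Fin 2) (Fin 2) F)
        + (1 : F) * Matrix.trace ((w⁻¹ : GL (Fin 2) F) : Matrix (Fin 2) (Fin 2) F)
      = ((w : Matrix (Fin 2) (Fin 2) F) 0 0 + (w : Matrix (Fin 2) (Fin 2) F) 1 1)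
          * (1 + ((w : Matrix (Fin 2) (Fin 2) F).det)⁻¹) := by
  set M := (w : Matrix (Fin 2) (Fin 2) F) with hM
  have hcoe : ((w⁻¹ : GL (Fin 2) F) : Matrix (Fin 2) (Fin 2) F) = M⁻¹ :=
    Matrix.coe_units_inv w
  rw [hcoe, Matrix.inv_def, Matrix.trace_smul, Matrix.adjugate_fin_two,
    Matrix.trace_fin_two, Matrix.trace_fin_two]
  simp [Ring.inverse_eq_inv']
  ring

theorem stmt14 {F : Type} [Field F] [Fintype F] [DecidableEq F]
    (hodd : Odd (Fintype.card F))
    (ψ : AddChar F ℂ) (hψ : ψ ≠ 1) :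
    KlGL 2 ψ 1
      = (Fintype.card F : ℂ)
          * ((Kl ψ 1) ^ 2 + (Fintype.card F : ℂ) ^ 2 - (Fintype.card F : ℂ)) := by
  classical
  set q : ℂ := (Fintype.card F : ℂ) with hq
  set K : ℂ := Kl ψ 1 with hK
  -- notation
  set G : F → ℂ := fun x => if x ≠ 0 then ψ (x + x⁻¹) else 0 with hG
  set T : F → ℂ := fun s => ∑ d : F, if d ≠ 0 then ψ (s * (1 + d⁻¹)) else 0 with hT
  -- Step 0: sum over G equals K
  have hGsum : ∑ a : F, G a = K := by
    have h1 : ∑ a : F, G a = ∑ a ∈ Finset.univ.filter (fun a : F => a ≠ 0), G a := by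
      refine (Finset.sum_filter_of_ne ?_).symm
      intro x _ hx
      rcases eq_or_ne x 0 with h | h
      · exact absurd (by simp [hG, h]) hx
      · exact h
    rw [h1]
    rw [hK, Kl]
    refine Finset.sum_bij' (fun (a : F) (ha : a ∈ Finset.univ.filter (fun a : F => a ≠ 0)) =>
        Units.mk0 a (by simpa using ha))
      (fun (α : Fˣ) _ => (α : F)) ?_ ?_ ?_ ?_ ?_
    · intro a ha; simp
    · intro α _; simp [Units.ne_zero α]
    · intro a ha; simp
    · intro α _; simp
    · intro a ha
      have ha' : a ≠ 0 := by simpa using ha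
      simp [hG, ha', one_mul]
  -- Step 1: KlGL as a sum over matrices
  have step1 : KlGL 2 ψ 1
      = ∑ M : Matrix (Fin 2) (Fin 2) F,
          if M.det ≠ 0 then ψ ((M 0 0 + M 1 1) * (1 + (M.det)⁻¹)) else 0 := by
    simp only [KlGL]
    rw [← Finset.sum_filter]
    refine Finset.sum_bij' (fun (w : GL (Fin 2) F) _ => (w : Matrix (Fin 2) (Fin 2) F))
      (fun M hM => Matrix.nonsingInvUnit M (isUnit_iff_ne_zero.2 (by simpa using hM)))
      ?_ ?_ ?_ ?_ ?_
    · intro w _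
      simp only [Finset.mem_filter, Finset.mem_univ, true_and, ne_eq]
      exact isUnit_iff_ne_zero.1 ((Matrix.isUnit_iff_isUnit_det _).1 w.isUnit)
    · intro M hM; exact Finset.mem_univ _
    · intro w _
      apply Units.ext
      rfl
    · intro M hM; rfl
    · intro w _
      rw [aux_trace_form w]
  -- Step 2: convert to sum over entries
  have step2 : KlGL 2 ψ 1
      = ∑ c : F, ∑ a : F, ∑ e : F, ∑ b : F,
          if a * e - b * c ≠ 0 then ψ ((a + e) * (1 + (a * e - b * c)⁻¹)) else 0 := by
    rw [step1]
    rw [← Equiv.sum_comp (aux_equiv (F := F))]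
    rw [Fintype.sum_prod_type]
    refine Finset.sum_congr rfl fun c _ => ?_
    rw [Fintype.sum_prod_type]
    refine Finset.sum_congr rfl fun a _ => ?_
    rw [Fintype.sum_prod_type]
    refine Finset.sum_congr rfl fun e _ => ?_
    refine Finset.sum_congr rfl fun b _ => ?_
    have hdet : (aux_equiv (c, a, e, b) : Matrix (Fin 2) (Fin 2) F).det = a * e - b * c := by
      simp [aux_equiv, Matrix.det_fin_two]
    have h00 : (aux_equiv (c, a, e, b) : Matrix (Fin 2) (Fin 2) F) 0 0 = a := by
      simp [aux_equiv]
    have h11 : (aux_equiv (c, a, e, b) : Matrix (Fin 2) (Fin 2) F) 1 1 = e := by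
      simp [aux_equiv]
    rw [hdet, h00, h11]
  -- Inner sum for c ≠ 0
  have innerT : ∀ c : F, c ≠ 0 → ∀ a e : F,
      (∑ b : F, if a * e - b * c ≠ 0 then ψ ((a + e) * (1 + (a * e - b * c)⁻¹)) else 0)
        = T (a + e) := by
    intro c hc a e
    rw [hT]
    refine Fintype.sum_equiv ((Equiv.mulRight₀ c hc).trans (Equiv.subLeft (a * e))) _ _ ?_
    intro b
    simp [Equiv.subLeft]
  -- Inner sum for c = 0
  have inner0 : ∀ a e : F,
      (∑ b : F, if a * e - b * 0 ≠ 0 then ψ ((a + e) * (1 + (a * e - b * 0)⁻¹)) else 0)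
        = q * (G a * G e) := by
    intro a e
    have hsummand : ∀ b : F,
        (if a * e - b * 0 ≠ 0 then ψ ((a + e) * (1 + (a * e - b * 0)⁻¹)) else 0)
          = G a * G e := by
      intro b
      rw [mul_zero, sub_zero]
      by_cases ha : a = 0
      · simp [hG, ha]
      by_cases he : e = 0
      · simp [hG, he]
      have hae : a * e ≠ 0 := mul_ne_zero ha he
      rw [if_pos hae]
      have harith : (a + e) * (1 + (a * e)⁻¹) = (a + a⁻¹) + (e + e⁻¹) := by
        field_simp
        ring
      rw [harith, AddChar.map_add_eq_mul]
      simp [hG, ha, he]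
    rw [Finset.sum_congr rfl fun b _ => hsummand b, Finset.sum_const, Finset.card_univ]
    simp [hq, nsmul_eq_mul]
  -- The sum of T over a e
  have hTsum : (∑ a : F, ∑ e : F, T (a + e)) = q ^ 2 := by
    have swap : (∑ a : F, ∑ e : F, T (a + e))
        = ∑ d : F, ∑ a : F, ∑ e : F,
            (if d ≠ 0 then ψ ((a + e) * (1 + d⁻¹)) else 0) := by
      have h1 : ∀ a : F, (∑ e : F, T (a + e))
          = ∑ d : F, ∑ e : F, (if d ≠ 0 then ψ ((a + e) * (1 + d⁻¹)) else 0) := fun a => by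
        simp only [hT]; exact Finset.sum_comm
      rw [Finset.sum_congr rfl fun a _ => h1 a]
      exact Finset.sum_comm
    rw [swap]
    have hterm : ∀ d : F,
        (∑ a : F, ∑ e : F, (if d ≠ 0 then ψ ((a + e) * (1 + d⁻¹)) else 0))
          = if d ≠ 0 then
              (if (1 + d⁻¹) = 0 then q else 0) * (if (1 + d⁻¹) = 0 then q else 0) else 0 := by
      intro d
      by_cases hd : d = 0
      · simp [hd]
      simp only [if_pos hd, hd, ne_eq, not_false_eq_true, if_true]
      rw [← aux_charSum ψ hψ (1 + d⁻¹), Finset.sum_mul_sum]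
      refine Finset.sum_congr rfl fun a _ => Finset.sum_congr rfl fun e _ => ?_
      rw [← AddChar.map_add_eq_mul]
      exact congrArg ψ (by ring)
    rw [Finset.sum_congr rfl fun d _ => hterm d]
    rw [Finset.sum_eq_single (-1 : F)]
    · have h1 : (1 : F) + (-1 : F)⁻¹ = 0 := by
        rw [inv_neg, inv_one]; ring
      have hne : (-1 : F) ≠ 0 := by
        intro h
        have : (1 : F) = 0 := by linear_combination -h
        exact one_ne_zero this
      rw [if_pos hne, if_pos h1]
      ring
    · intro d _ hd1
      by_cases hd : d = 0
      · simp [hd]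
      rw [if_pos hd]
      have : (1 : F) + d⁻¹ ≠ 0 := by
        intro h
        apply hd1
        have hinv : d⁻¹ = -1 := by linear_combination h
        have : d = (-1 : F)⁻¹ := by rw [← hinv, inv_inv]
        rw [this, inv_neg, inv_one]
      rw [if_neg this, mul_zero]
    · intro h; exact absurd (Finset.mem_univ _) h
  -- assemble
  rw [step2]
  have hsplit : (∑ c : F, ∑ a : F, ∑ e : F, ∑ b : F,
        if a * e - b * c ≠ 0 then ψ ((a + e) * (1 + (a * e - b * c)⁻¹)) else 0)
      = (∑ a : F, ∑ e : F, ∑ b : F,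
          if a * e - b * (0:F) ≠ 0 then ψ ((a + e) * (1 + (a * e - b * (0:F))⁻¹)) else 0)
        + ∑ c ∈ Finset.univ.erase (0 : F), ∑ a : F, ∑ e : F, ∑ b : F,
            if a * e - b * c ≠ 0 then ψ ((a + e) * (1 + (a * e - b * c)⁻¹)) else 0 := by
    exact (Finset.add_sum_erase Finset.univ
      (fun c => ∑ a : F, ∑ e : F, ∑ b : F,
        if a * e - b * c ≠ 0 then ψ ((a + e) * (1 + (a * e - b * c)⁻¹)) else 0)
      (Finset.mem_univ (0 : F))).symm
  rw [hsplit]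
  have hpart0 : (∑ a : F, ∑ e : F, ∑ b : F,
        if a * e - b * (0:F) ≠ 0 then ψ ((a + e) * (1 + (a * e - b * (0:F))⁻¹)) else 0)
      = q * K ^ 2 := by
    rw [Finset.sum_congr rfl fun a _ => Finset.sum_congr rfl fun e _ => inner0 a e]
    have : (∑ a : F, ∑ e : F, q * (G a * G e)) = q * ((∑ a : F, G a) * (∑ e : F, G e)) := by
      rw [Finset.sum_mul_sum]
      rw [Finset.mul_sum]
      refine Finset.sum_congr rfl fun a _ => ?_
      rw [Finset.mul_sum]
    rw [this, hGsum]
    ring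
  have hpartc : (∑ c ∈ Finset.univ.erase (0 : F), ∑ a : F, ∑ e : F, ∑ b : F,
        if a * e - b * c ≠ 0 then ψ ((a + e) * (1 + (a * e - b * c)⁻¹)) else 0)
      = (q - 1) * q ^ 2 := by
    have hconst : ∀ c ∈ Finset.univ.erase (0 : F),
        (∑ a : F, ∑ e : F, ∑ b : F,
          if a * e - b * c ≠ 0 then ψ ((a + e) * (1 + (a * e - b * c)⁻¹)) else 0) = q ^ 2 := by
      intro c hc
      have hc0 : c ≠ 0 := Finset.ne_of_mem_erase hc
      rw [Finset.sum_congr rfl fun a _ => Finset.sum_congr rfl fun e _ => innerT c hc0 a e]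
      exact hTsum
    rw [Finset.sum_congr rfl hconst, Finset.sum_const, Finset.card_erase_of_mem (Finset.mem_univ _),
      Finset.card_univ, nsmul_eq_mul]
    have hcast : ((Fintype.card F - 1 : ℕ) : ℂ) = q - 1 := by
      rw [Nat.cast_sub Fintype.card_pos, Nat.cast_one, hq]
    rw [hcast]
  rw [hpart0, hpartc]
  ring
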